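/- Let P be a polynomial of degree n, let F and α be entire functions, and put H(z) := P(z) · F(α(z)). Suppose that α′ has at least one zero and that H′ and α′ have no common zeros. Then there exists an at most countable set E ⊂ ℂ such that for every a ∈ ℂ \ E and every c ∈ ℂ, the set {z ∈ ℂ : H(z) − a·α(z) = c and H′(z) − a·α′(z) = 0} has at most n elements. -/

import Mathlib

/-!
Where `α' ≠ 0`, put `φ = H'/α'` and `ψ = H - φ α`: then `z` is a critical point of `H - a α`
exactly when `φ z = a`, and its critical value is `ψ z`, while `ψ' = -φ' α`. Away from the
countably many critical values of `φ`, the branches `z(a)` of `φ⁻¹(a)` are holomorphic and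
`d/da ψ(z(a)) = -α(z(a))`. Two branches with the same critical value and different `α` therefore
meet transversally, which happens only for countably many `a`. For the remaining `a ≠ 0`, all
critical points of `H - a α` on a level set share the value `w` of `α`, and `H = P · F ∘ α`
forces `P` to be constant on them (from `H = a w + c` if `F w ≠ 0`, from `H' = a α'` otherwise);
so they are among the `n` roots of `P - t`.
-/

open Topology Filter Set Polynomial

theorem countable_image_of_eventually_eq {X Y : Type*} [TopologicalSpace X]
    [SecondCountableTopology X] {f : X → Y} {S : Set X}
    (h : ∀ x ∈ S, ∀ᶠ y in 𝓝 x, y ∈ S → f y = f x) : (f '' S).Countable := by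
  choose V hfV hV hxV using fun x : S => mem_nhds_iff.1 (h x x.2)
  obtain ⟨T, hT, hTV⟩ := TopologicalSpace.isOpen_iUnion_countable V hV
  refine (hT.image fun x : S => f x).mono ?_
  rintro _ ⟨y, hy, rfl⟩
  have hyV : y ∈ ⋃ x ∈ T, V x := hTV ▸ mem_iUnion.2 ⟨⟨y, hy⟩, hxV ⟨y, hy⟩⟩
  obtain ⟨x, hxT, hyx⟩ := mem_iUnion₂.1 hyV
  exact ⟨x, hxT, (hfV x hyx hy).symm⟩

theorem AnalyticAt.eventually_eq_of_deriv_eq_zero {f : ℂ → ℂ} {z : ℂ}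
    (hf : AnalyticAt ℂ f z) : ∀ᶠ w in 𝓝 z, deriv f w = 0 → f w = f z := by
  rcases hf.deriv.eventually_eq_zero_or_eventually_ne_zero with h | h
  · obtain ⟨r, hr, hball⟩ := Metric.eventually_nhds_iff_ball.1 (h.and hf.eventually_analyticAt)
    filter_upwards [Metric.ball_mem_nhds z hr] with w hw _
    exact Metric.isOpen_ball.is_const_of_deriv_eq_zero (convex_ball z r).isPreconnected
      (fun u hu => (hball u hu).2.differentiableAt.differentiableWithinAt)
      (fun u hu => (hball u hu).1) hw (Metric.mem_ball_self hr)
  · filter_upwards [eventually_nhdsWithin_iff.1 h] with w hw hw0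
    rcases eq_or_ne w z with rfl | hwz
    · rfl
    · exact absurd hw0 (hw hwz)

/-- `ψ₁ / φ₁` and `ψ₂ / φ₂` are the slopes at `φ z₁` of the two local graphs of `ψ` over the
coordinate `φ`; when they differ, the graphs meet near `φ z₁` only over `φ z₁` itself. -/
theorem eventually_eq_of_hasStrictDerivAt_of_slope_ne {𝕜 : Type*} [NontriviallyNormedField 𝕜]
    [CompleteSpace 𝕜] {φ ψ : 𝕜 → 𝕜} {z₁ z₂ φ₁ φ₂ ψ₁ ψ₂ : 𝕜}
    (hφ₁ : HasStrictDerivAt φ φ₁ z₁) (hφ₂ : HasStrictDerivAt φ φ₂ z₂) (h₁ : φ₁ ≠ 0)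
    (h₂ : φ₂ ≠ 0) (hψ₁ : HasDerivAt ψ ψ₁ z₁) (hψ₂ : HasDerivAt ψ ψ₂ z₂)
    (hφ : φ z₁ = φ z₂) (hψ : ψ z₁ = ψ z₂) (hslope : ψ₁ / φ₁ ≠ ψ₂ / φ₂) :
    ∀ᶠ u in 𝓝 (z₁, z₂), φ u.1 = φ u.2 → ψ u.1 = ψ u.2 → φ u.1 = φ z₁ := by
  set w₁ := hφ₁.localInverse φ φ₁ z₁ h₁
  set w₂ := hφ₂.localInverse φ φ₂ z₂ h₂
  have hw₁ : HasDerivAt w₁ φ₁⁻¹ (φ z₁) := (hφ₁.to_localInverse h₁).hasDerivAt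
  have hw₂ : HasDerivAt w₂ φ₂⁻¹ (φ z₁) := hφ ▸ (hφ₂.to_localInverse h₂).hasDerivAt
  have hw₁z : w₁ (φ z₁) = z₁ := (hφ₁.eventually_left_inverse h₁).self_of_nhds
  have hw₂z : w₂ (φ z₁) = z₂ := hφ ▸ (hφ₂.eventually_left_inverse h₂).self_of_nhds
  set g : 𝕜 → 𝕜 := fun a => ψ (w₁ a) - ψ (w₂ a)
  have hg : HasDerivAt g (ψ₁ * φ₁⁻¹ - ψ₂ * φ₂⁻¹) (φ z₁) :=
    ((hw₁z ▸ hψ₁).comp _ hw₁).sub ((hw₂z ▸ hψ₂).comp _ hw₂)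
  have hg0 : g (φ z₁) = 0 := by simp only [g, hw₁z, hw₂z, hψ, sub_self]
  have hgz : ∀ᶠ a in 𝓝 (φ z₁), g a = 0 → a = φ z₁ := by
    have hne := hg.eventually_ne (c := 0) (by simpa [div_eq_mul_inv, sub_eq_zero] using hslope)
    filter_upwards [eventually_nhdsWithin_iff.1 hne] with a ha hga
    by_contra hneq
    exact ha hneq hga
  have hfst := continuous_fst.continuousAt (x := (z₁, z₂))
  have hsnd := continuous_snd.continuousAt (x := (z₁, z₂))
  filter_upwards [hfst.eventually (hφ₁.hasDerivAt.continuousAt.eventually hgz),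
    hfst.eventually (hφ₁.eventually_left_inverse h₁),
    hsnd.eventually (hφ₂.eventually_left_inverse h₂)] with u hu hu₁ hu₂ hφu hψu
  apply hu
  change ψ (w₁ (φ u.1)) - ψ (w₂ (φ u.1)) = 0
  rw [show w₁ (φ u.1) = u.1 from hu₁, hφu, show w₂ (φ u.2) = u.2 from hu₂, hψu, sub_self]

theorem Polynomial.exists_finset_card_le_of_eval_eq {R : Type*} [CommRing R] [IsDomain R]
    {P : R[X]} (hP : 0 < P.degree) {S : Set R} (hS : ∀ z ∈ S, ∀ z' ∈ S, P.eval z = P.eval z') :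
    ∃ s : Finset R, s.card ≤ P.natDegree ∧ S ⊆ s := by
  classical
  rcases S.eq_empty_or_nonempty with rfl | ⟨z₀, hz₀⟩
  · exact ⟨∅, by simp, by simp⟩
  have hne : P - C (P.eval z₀) ≠ 0 := fun h =>
    hP.not_ge (sub_eq_zero.1 h ▸ degree_C_le)
  refine ⟨(P - C (P.eval z₀)).roots.toFinset,
    (Multiset.toFinset_card_le _).trans (card_roots_sub_C' hP), fun z hz => ?_⟩
  simp [mem_roots hne, hS z hz z₀ hz₀]

section Critical

variable {H α : ℂ → ℂ}

/-- The parameter `a` for which `z` is a critical point of `H - a α` (when `α' z ≠ 0`). -/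
noncomputable def critParam (H α : ℂ → ℂ) (z : ℂ) : ℂ := deriv H z / deriv α z

noncomputable def critValue (H α : ℂ → ℂ) (z : ℂ) : ℂ := H z - critParam H α z * α z

def critSet (H α : ℂ → ℂ) (a c : ℂ) : Set ℂ :=
  {z | H z - a * α z = c ∧ deriv H z - a * deriv α z = 0}

theorem analyticAt_critParam (hH : Differentiable ℂ H) (hα : Differentiable ℂ α) {z : ℂ}
    (hz : deriv α z ≠ 0) : AnalyticAt ℂ (critParam H α) z :=
  (hH.analyticAt z).deriv.div (hα.analyticAt z).deriv hz

theorem hasDerivAt_critValue (hH : Differentiable ℂ H) (hα : Differentiable ℂ α) {z : ℂ}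
    (hz : deriv α z ≠ 0) :
    HasDerivAt (critValue H α) (-(deriv (critParam H α) z * α z)) z := by
  have h : HasDerivAt (critValue H α)
      (deriv H z - (deriv (critParam H α) z * α z + critParam H α z * deriv α z)) z :=
    (hH z).hasDerivAt.sub
      ((analyticAt_critParam hH hα hz).differentiableAt.hasDerivAt.mul (hα z).hasDerivAt)
  refine h.congr_deriv ?_
  rw [critParam, div_mul_cancel₀ _ hz]
  ring

theorem deriv_ne_zero_of_mem_critSet (hno : ∀ z, ¬(deriv H z = 0 ∧ deriv α z = 0))
    {a c z : ℂ} (hz : z ∈ critSet H α a c) : deriv α z ≠ 0 := fun h0 =>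
  hno z ⟨by simpa [h0] using hz.2, h0⟩

theorem critParam_eq_of_mem_critSet (hno : ∀ z, ¬(deriv H z = 0 ∧ deriv α z = 0))
    {a c z : ℂ} (hz : z ∈ critSet H α a c) : critParam H α z = a := by
  rw [critParam, sub_eq_zero.1 hz.2,
    mul_div_cancel_right₀ a (deriv_ne_zero_of_mem_critSet hno hz)]

theorem critValue_eq_of_mem_critSet (hno : ∀ z, ¬(deriv H z = 0 ∧ deriv α z = 0))
    {a c z : ℂ} (hz : z ∈ critSet H α a c) : critValue H α z = c := by
  rw [critValue, critParam_eq_of_mem_critSet hno hz, hz.1]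

theorem exists_countable_forall_mem_critSet_apply_eq (hH : Differentiable ℂ H)
    (hα : Differentiable ℂ α) (hno : ∀ z, ¬(deriv H z = 0 ∧ deriv α z = 0)) :
    ∃ E : Set ℂ, E.Countable ∧ ∀ a ∉ E, ∀ c, ∀ z₁ ∈ critSet H α a c, ∀ z₂ ∈ critSet H α a c,
      α z₁ = α z₂ := by
  set φ := critParam H α
  set ψ := critValue H α
  have hφ : ∀ z, deriv α z ≠ 0 → AnalyticAt ℂ φ z := fun z => analyticAt_critParam hH hα
  set Crit : Set ℂ := {z | deriv α z ≠ 0 ∧ deriv φ z = 0}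
  set Cross : Set (ℂ × ℂ) := {u | deriv α u.1 ≠ 0 ∧ deriv α u.2 ≠ 0 ∧ deriv φ u.1 ≠ 0 ∧
    deriv φ u.2 ≠ 0 ∧ φ u.1 = φ u.2 ∧ ψ u.1 = ψ u.2 ∧ α u.1 ≠ α u.2}
  have hCrit : (φ '' Crit).Countable := countable_image_of_eventually_eq fun z hz =>
    ((hφ z hz.1).eventually_eq_of_deriv_eq_zero).mono fun w hw hwC => hw hwC.2
  have hCross : ((fun u => φ u.1) '' Cross).Countable := by
    refine countable_image_of_eventually_eq fun u hu => ?_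
    obtain ⟨hα₁, hα₂, hφ₁, hφ₂, hφu, hψu, hαu⟩ := hu
    have hslope : -(deriv φ u.1 * α u.1) / deriv φ u.1 ≠ -(deriv φ u.2 * α u.2) / deriv φ u.2 := by
      rwa [neg_div, neg_div, mul_div_cancel_left₀ _ hφ₁, mul_div_cancel_left₀ _ hφ₂, Ne, neg_inj]
    filter_upwards [eventually_eq_of_hasStrictDerivAt_of_slope_ne (hφ _ hα₁).hasStrictDerivAt
      (hφ _ hα₂).hasStrictDerivAt hφ₁ hφ₂ (hasDerivAt_critValue hH hα hα₁)
      (hasDerivAt_critValue hH hα hα₂) hφu hψu hslope] with v hv hvC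
    exact hv hvC.2.2.2.2.1 hvC.2.2.2.2.2.1
  refine ⟨φ '' Crit ∪ (fun u => φ u.1) '' Cross, hCrit.union hCross, fun a ha c z₁ h₁ z₂ h₂ => ?_⟩
  have hα₁ := deriv_ne_zero_of_mem_critSet hno h₁
  have hα₂ := deriv_ne_zero_of_mem_critSet hno h₂
  have ha₁ : φ z₁ = a := critParam_eq_of_mem_critSet hno h₁
  have ha₂ : φ z₂ = a := critParam_eq_of_mem_critSet hno h₂
  have hφ₁ : deriv φ z₁ ≠ 0 := fun h => ha (Or.inl ⟨z₁, ⟨hα₁, h⟩, ha₁⟩)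
  have hφ₂ : deriv φ z₂ ≠ 0 := fun h => ha (Or.inl ⟨z₂, ⟨hα₂, h⟩, ha₂⟩)
  by_contra hne
  refine ha (Or.inr ⟨(z₁, z₂), ⟨hα₁, hα₂, hφ₁, hφ₂, ha₁.trans ha₂.symm, ?_, hne⟩, ha₁⟩)
  exact (critValue_eq_of_mem_critSet hno h₁).trans (critValue_eq_of_mem_critSet hno h₂).symm

end Critical

section Product

variable {P : ℂ[X]} {F α H : ℂ → ℂ}

theorem deriv_eq_of_eq_eval_mul_comp (hF : Differentiable ℂ F) (hα : Differentiable ℂ α)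
    (hHdef : ∀ z, H z = P.eval z * F (α z)) (z : ℂ) :
    deriv H z = P.derivative.eval z * F (α z) + P.eval z * (deriv F (α z) * deriv α z) := by
  rw [funext hHdef]
  exact ((P.hasDerivAt z).mul ((hF (α z)).hasDerivAt.comp z (hα z).hasDerivAt)).deriv

theorem degree_pos_of_eq_eval_mul_comp (hF : Differentiable ℂ F) (hα : Differentiable ℂ α)
    (hHdef : ∀ z, H z = P.eval z * F (α z)) (hzero : ∃ z, deriv α z = 0)
    (hno : ∀ z, ¬(deriv H z = 0 ∧ deriv α z = 0)) : 0 < P.degree := by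
  obtain ⟨z₀, hz₀⟩ := hzero
  by_contra hP
  have hP' : P.derivative = 0 := by
    rw [eq_C_of_degree_le_zero (not_lt.1 hP), derivative_C]
  exact hno z₀ ⟨by simp [deriv_eq_of_eq_eval_mul_comp hF hα hHdef, hP', hz₀], hz₀⟩

theorem eval_mul_eq_of_mem_critSet (hHdef : ∀ z, H z = P.eval z * F (α z)) {a c z : ℂ}
    (hz : z ∈ critSet H α a c) : P.eval z * F (α z) = a * α z + c := by
  rw [← hHdef, ← hz.1]
  ring

theorem eval_mul_deriv_eq_of_mem_critSet (hF : Differentiable ℂ F) (hα : Differentiable ℂ α)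
    (hHdef : ∀ z, H z = P.eval z * F (α z)) (hno : ∀ z, ¬(deriv H z = 0 ∧ deriv α z = 0))
    {a c z : ℂ} (hz : z ∈ critSet H α a c) (hFz : F (α z) = 0) :
    P.eval z * deriv F (α z) = a := by
  refine mul_right_cancel₀ (deriv_ne_zero_of_mem_critSet hno hz) ?_
  rw [← sub_eq_zero.1 hz.2, deriv_eq_of_eq_eval_mul_comp hF hα hHdef, hFz]
  ring

theorem eval_eq_of_mem_critSet (hF : Differentiable ℂ F) (hα : Differentiable ℂ α)
    (hHdef : ∀ z, H z = P.eval z * F (α z)) (hno : ∀ z, ¬(deriv H z = 0 ∧ deriv α z = 0))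
    {a c z z' : ℂ} (ha : a ≠ 0) (hz : z ∈ critSet H α a c) (hz' : z' ∈ critSet H α a c)
    (hαz : α z = α z') : P.eval z = P.eval z' := by
  by_cases hFz : F (α z) = 0
  · have h := eval_mul_deriv_eq_of_mem_critSet hF hα hHdef hno hz hFz
    have h' := eval_mul_deriv_eq_of_mem_critSet hF hα hHdef hno hz' (hαz ▸ hFz)
    rw [← hαz] at h'
    refine mul_right_cancel₀ (fun h0 => ha ?_) (h.trans h'.symm)
    rw [← h, h0, mul_zero]
  · have h := eval_mul_eq_of_mem_critSet hHdef hz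
    have h' := eval_mul_eq_of_mem_critSet hHdef hz'
    rw [← hαz] at h'
    exact mul_right_cancel₀ hFz (h.trans h'.symm)

end Product

/-- Let P be a polynomial of degree n, let F and α be entire
functions, and put H(z) := P(z)·F(α(z)). Suppose α′ has at least one zero and
H′ and α′ have no common zeros. Then there is an at most countable set E ⊂ ℂ
such that for every a ∉ E and every c ∈ ℂ the set
{z : H(z) − a·α(z) = c and H′(z) − a·α′(z) = 0} has at most n elements. -/
theorem stmt9 (P : Polynomial ℂ) (n : ℕ) (hP : P.degree = n)
    (F α : ℂ → ℂ) (hF : Differentiable ℂ F) (hα : Differentiable ℂ α)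
    (H : ℂ → ℂ) (hHdef : ∀ z : ℂ, H z = P.eval z * F (α z))
    (hzero : ∃ z : ℂ, deriv α z = 0)
    (hno : ∀ z : ℂ, ¬(deriv H z = 0 ∧ deriv α z = 0)) :
    ∃ E : Set ℂ, E.Countable ∧
      ∀ a : ℂ, a ∉ E → ∀ c : ℂ,
        ∃ s : Finset ℂ, s.card ≤ n ∧
          {z : ℂ | H z - a * α z = c ∧ deriv H z - a * deriv α z = 0} ⊆ ↑s := by
  have hH : Differentiable ℂ H := by
    rw [funext hHdef]
    exact P.differentiable.mul (hF.comp hα)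
  obtain ⟨E, hE, hαconst⟩ := exists_countable_forall_mem_critSet_apply_eq hH hα hno
  refine ⟨insert 0 E, hE.insert 0, fun a ha c => ?_⟩
  obtain ⟨s, hs, hsub⟩ := exists_finset_card_le_of_eval_eq
    (degree_pos_of_eq_eval_mul_comp hF hα hHdef hzero hno) fun z hz z' hz' =>
      eval_eq_of_mem_critSet hF hα hHdef hno (fun h => ha (.inl h)) hz hz'
        (hαconst a (fun h => ha (.inr h)) c z hz z' hz')
  exact ⟨s, natDegree_eq_of_degree_eq_some hP ▸ hs, hsub⟩
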